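/- (i) If 𝐀 is an operator of positive type on X × Y, then 𝒮(𝐀) ≤ 𝐀 and ker 𝐀 ⊆ ker 𝒮(𝐀). (ii) If 𝐀, 𝐀₁ are of positive type and 𝐀 ≤ 𝐀₁ (in the Loewner semi-ordering), then 𝒮(𝐀) ≤ 𝒮(𝐀₁). (iii) If 𝐀 is non-negative, then 𝒮(𝐀) is non-negative. -/

import Mathlib

/-!
Write `A = R*R` and `B = R*T`. Completing the square gives
`⟨𝐀(x, y), (x, y)⟩ = ‖R x + T y‖² + ⟨𝒮(𝐀) y, y⟩`, hence `𝒮(𝐀) ≤ 𝐀`. Since `T y` lies in the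
closure of `ran R`, the square can be made arbitrarily small, so `⟨𝒮(𝐀) y, y⟩` is the infimum
over `x` of the form of `𝐀`; (ii) and (iii) follow by comparing lower bounds. If `𝐀(x, y) = 0`,
the first row says that `R x + T y` is orthogonal to `ran R`; it also lies in the closure of
`ran R`, so `T y = -R x`, and the second row becomes `𝒮(𝐀) y = 0`.
-/

open scoped ComplexOrder ComplexConjugate
open Complex

noncomputable section

/-- For a linear map `R : V → H` into a Hilbert space, `adjMap R : H → V'` is the
operator `R*`, sending `h` to the antilinear functional `v ↦ (h | R v)`
(in Mathlib's convention, `v ↦ ⟪R v, h⟫`). -/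
def adjMap {V H : Type*} [AddCommGroup V] [Module ℂ V]
    [NormedAddCommGroup H] [InnerProductSpace ℂ H] (R : V →ₗ[ℂ] H) :
    H →ₗ[ℂ] (V →ₗ⋆[ℂ] ℂ) where
  toFun h :=
    { toFun := fun v => @inner ℂ _ _ (R v) h
      map_add' := fun v w => by simp [inner_add_left]
      map_smul' := fun c v => by simp [inner_smul_left, mul_comm] }
  map_add' h₁ h₂ := by ext v; simp [inner_add_right]
  map_smul' c h := by ext v; simp [inner_smul_right]

/-- For `B : Y → X'`, the operator `B~ := B'↾X : X → Y'`, `(B~ x) y = conj (⟨B y, x⟩)`. -/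
def Btilde {X Y : Type*} [AddCommGroup X] [Module ℂ X] [AddCommGroup Y] [Module ℂ Y]
    (B : Y →ₗ[ℂ] (X →ₗ⋆[ℂ] ℂ)) : X →ₗ[ℂ] (Y →ₗ⋆[ℂ] ℂ) where
  toFun x :=
    { toFun := fun y => conj (B y x)
      map_add' := fun y₁ y₂ => by simp
      map_smul' := fun c y => by simp }
  map_add' x₁ x₂ := by ext y; simp
  map_smul' c x := by ext y; simp

section ShortedOperator

variable {X Y H : Type*} [AddCommGroup X] [Module ℂ X] [AddCommGroup Y] [Module ℂ Y]
  [NormedAddCommGroup H] [InnerProductSpace ℂ H]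

local notation "⟪" a ", " b "⟫" => @inner ℂ _ _ a b

/-- The quadratic form `⟨𝐀(x, y), (x, y)⟩` of `𝐀 = [[A, B], [B~, D]]`. -/
def blockForm (A : X →ₗ[ℂ] (X →ₗ⋆[ℂ] ℂ)) (B : Y →ₗ[ℂ] (X →ₗ⋆[ℂ] ℂ))
    (D : Y →ₗ[ℂ] (Y →ₗ⋆[ℂ] ℂ)) (x : X) (y : Y) : ℂ :=
  (A x + B y) x + (Btilde B x + D y) y

/-- The quadratic form of `𝒮(𝐀)`, where `ω(A, B) = T*T` for a factorization `A = R*R`,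
`B = R*T`. -/
def shortedForm (D : Y →ₗ[ℂ] (Y →ₗ⋆[ℂ] ℂ)) (T : Y →ₗ[ℂ] H) (y : Y) : ℂ :=
  (D y - adjMap T (T y)) y

omit [AddCommGroup Y] [Module ℂ Y] in
theorem adjMap_apply (R : X →ₗ[ℂ] H) (h : H) (x : X) : adjMap R h x = ⟪R x, h⟫ := rfl

omit [NormedAddCommGroup H] [InnerProductSpace ℂ H] in
theorem Btilde_apply (B : Y →ₗ[ℂ] (X →ₗ⋆[ℂ] ℂ)) (x : X) (y : Y) :
    Btilde B x y = conj (B y x) := rfl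

omit [AddCommGroup X] [Module ℂ X] in
theorem eq_zero_of_mem_closure_of_forall_inner_eq_zero {s : Set H} {v : H}
    (hv : v ∈ closure s) (h : ∀ w ∈ s, ⟪w, v⟫ = 0) : v = 0 := by
  have hclosed : IsClosed {w : H | ⟪w, v⟫ = 0} :=
    isClosed_eq (continuous_id.inner continuous_const) continuous_const
  exact inner_self_eq_zero.mp (hclosed.closure_subset_iff.mpr h hv)

variable {A : X →ₗ[ℂ] (X →ₗ⋆[ℂ] ℂ)} {B : Y →ₗ[ℂ] (X →ₗ⋆[ℂ] ℂ)} {D : Y →ₗ[ℂ] (Y →ₗ⋆[ℂ] ℂ)}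
  {R : X →ₗ[ℂ] H} {T : Y →ₗ[ℂ] H}

theorem blockForm_eq_norm_sq_add_shortedForm (hR : ∀ x, A x = adjMap R (R x))
    (hT : ∀ y, adjMap R (T y) = B y) (x : X) (y : Y) :
    blockForm A B D x y = (‖R x + T y‖ : ℂ) ^ 2 + shortedForm D T y := by
  have hA : A x x = ⟪R x, R x⟫ := by rw [hR]; rfl
  have hB : B y x = ⟪R x, T y⟫ := by rw [← hT]; rfl
  have hnorm : (‖R x + T y‖ : ℂ) ^ 2 = ⟪R x + T y, R x + T y⟫ :=
    (inner_self_eq_norm_sq_to_K (𝕜 := ℂ) (R x + T y)).symm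
  rw [hnorm]
  simp only [blockForm, shortedForm, LinearMap.add_apply, LinearMap.sub_apply, Btilde_apply,
    adjMap_apply, hA, hB, inner_add_left, inner_add_right, inner_conj_symm]
  ring

theorem shortedForm_le_blockForm (hR : ∀ x, A x = adjMap R (R x))
    (hT : ∀ y, adjMap R (T y) = B y) (x : X) (y : Y) :
    shortedForm D T y ≤ blockForm A B D x y := by
  rw [blockForm_eq_norm_sq_add_shortedForm hR hT]
  exact le_add_of_nonneg_left (by positivity)

theorem le_shortedForm_of_forall_le_blockForm (hR : ∀ x, A x = adjMap R (R x))
    (hT : ∀ y, adjMap R (T y) = B y) (hTran : ∀ y, T y ∈ closure (Set.range R))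
    {c : ℂ} {y : Y} (h : ∀ x, c ≤ blockForm A B D x y) : c ≤ shortedForm D T y := by
  let f : H → ℂ := fun v => (‖v + T y‖ : ℂ) ^ 2 + shortedForm D T y
  have hf : Continuous f := by fun_prop
  have hmaps : Set.MapsTo f (Set.range R) (Set.Ici c) := by
    rintro _ ⟨x, rfl⟩
    simpa [f, ← blockForm_eq_norm_sq_add_shortedForm hR hT] using h x
  have hneg : -T y ∈ closure (Set.range R) := by simpa using hTran (-y)
  simpa [f, isClosed_Ici.closure_eq] using map_mem_closure hf hneg hmaps

theorem shortedForm_eq_zero_of_blockForm_kernel (hR : ∀ x, A x = adjMap R (R x))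
    (hT : ∀ y, adjMap R (T y) = B y) (hTran : ∀ y, T y ∈ closure (Set.range R))
    {x : X} {y : Y} (hAB : A x + B y = 0) (hBD : Btilde B x + D y = 0) :
    D y - adjMap T (T y) = 0 := by
  have horth : ∀ w ∈ Set.range R, ⟪w, R x + T y⟫ = 0 := by
    rintro _ ⟨x', rfl⟩
    have := LinearMap.congr_fun hAB x'
    rwa [LinearMap.add_apply, hR, ← hT, adjMap_apply, adjMap_apply, ← inner_add_right] at this
  have hmem : R x + T y ∈ closure (Set.range R) := by
    rw [← LinearMap.coe_range, ← Submodule.topologicalClosure_coe] at hTran ⊢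
    exact add_mem ((LinearMap.range R).le_topologicalClosure (LinearMap.mem_range_self R x))
      (hTran y)
  have hTy : T y = -R x :=
    eq_neg_of_add_eq_zero_right (eq_zero_of_mem_closure_of_forall_inner_eq_zero hmem horth)
  ext y'
  have := LinearMap.congr_fun hBD y'
  rw [LinearMap.add_apply, Btilde_apply, ← hT, adjMap_apply, inner_conj_symm] at this
  rw [LinearMap.sub_apply, adjMap_apply, hTy, inner_neg_right]
  linear_combination this

end ShortedOperator

theorem schur_stmt10_general {X Y H H₁ : Type} [AddCommGroup X] [Module ℂ X]
    [AddCommGroup Y] [Module ℂ Y]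
    [NormedAddCommGroup H] [InnerProductSpace ℂ H]
    [NormedAddCommGroup H₁] [InnerProductSpace ℂ H₁]
    (A : X →ₗ[ℂ] (X →ₗ⋆[ℂ] ℂ)) (B : Y →ₗ[ℂ] (X →ₗ⋆[ℂ] ℂ))
    (D : Y →ₗ[ℂ] (Y →ₗ⋆[ℂ] ℂ))
    (A₁ : X →ₗ[ℂ] (X →ₗ⋆[ℂ] ℂ)) (B₁ : Y →ₗ[ℂ] (X →ₗ⋆[ℂ] ℂ))
    (D₁ : Y →ₗ[ℂ] (Y →ₗ⋆[ℂ] ℂ))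
    (R : X →ₗ[ℂ] H) (T : Y →ₗ[ℂ] H)
    (R₁ : X →ₗ[ℂ] H₁) (T₁ : Y →ₗ[ℂ] H₁)
    (hR : ∀ x, A x = adjMap R (R x))
    (hT : ∀ y, adjMap R (T y) = B y)
    (hTran : ∀ y, T y ∈ closure (Set.range R))
    (hR₁ : ∀ x, A₁ x = adjMap R₁ (R₁ x))
    (hT₁ : ∀ y, adjMap R₁ (T₁ y) = B₁ y)
    (hT₁ran : ∀ y, T₁ y ∈ closure (Set.range R₁)) :
    -- (i) 𝒮(𝐀) ≤ 𝐀
    (∀ (x : X) (y : Y),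
        (D y - adjMap T (T y)) y ≤ (A x + B y) x + ((Btilde B) x + D y) y) ∧
      -- (i) ker 𝐀 ⊆ ker 𝒮(𝐀)
      (∀ (x : X) (y : Y), A x + B y = 0 → Btilde B x + D y = 0 →
        D y - adjMap T (T y) = 0) ∧
      -- (ii) 𝐀 ≤ 𝐀₁ → 𝒮(𝐀) ≤ 𝒮(𝐀₁)
      ((∀ (x : X) (y : Y),
          (A x + B y) x + ((Btilde B) x + D y) y ≤
            (A₁ x + B₁ y) x + ((Btilde B₁) x + D₁ y) y) →
        ∀ y : Y, (D y - adjMap T (T y)) y ≤ (D₁ y - adjMap T₁ (T₁ y)) y) ∧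
      -- (iii) 𝐀 ≥ 0 → 𝒮(𝐀) ≥ 0
      ((∀ (x : X) (y : Y), 0 ≤ (A x + B y) x + ((Btilde B) x + D y) y) →
        ∀ y : Y, 0 ≤ (D y - adjMap T (T y)) y) := by
  refine ⟨fun x y => shortedForm_le_blockForm hR hT x y,
    fun x y => shortedForm_eq_zero_of_blockForm_kernel hR hT hTran,
    fun hle y => le_shortedForm_of_forall_le_blockForm hR₁ hT₁ hT₁ran fun x =>
      (shortedForm_le_blockForm hR hT x y).trans (hle x y),
    fun hpos y => le_shortedForm_of_forall_le_blockForm hR hT hTran fun x => hpos x y⟩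

theorem schur_stmt10 {X Y H H₁ : Type} [AddCommGroup X] [Module ℂ X]
    [AddCommGroup Y] [Module ℂ Y]
    [NormedAddCommGroup H] [InnerProductSpace ℂ H] [CompleteSpace H]
    [NormedAddCommGroup H₁] [InnerProductSpace ℂ H₁] [CompleteSpace H₁]
    (A : X →ₗ[ℂ] (X →ₗ⋆[ℂ] ℂ)) (B : Y →ₗ[ℂ] (X →ₗ⋆[ℂ] ℂ))
    (D : Y →ₗ[ℂ] (Y →ₗ⋆[ℂ] ℂ))
    (A₁ : X →ₗ[ℂ] (X →ₗ⋆[ℂ] ℂ)) (B₁ : Y →ₗ[ℂ] (X →ₗ⋆[ℂ] ℂ))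
    (D₁ : Y →ₗ[ℂ] (Y →ₗ⋆[ℂ] ℂ))
    (R : X →ₗ[ℂ] H) (T : Y →ₗ[ℂ] H)
    (R₁ : X →ₗ[ℂ] H₁) (T₁ : Y →ₗ[ℂ] H₁)
    (hDh : ∀ y₁ y₂, D y₁ y₂ = conj (D y₂ y₁))
    (hD₁h : ∀ y₁ y₂, D₁ y₁ y₂ = conj (D₁ y₂ y₁))
    (hR : ∀ x, A x = adjMap R (R x))
    (hT : ∀ y, adjMap R (T y) = B y)
    (hTran : ∀ y, T y ∈ closure (Set.range R))
    (hR₁ : ∀ x, A₁ x = adjMap R₁ (R₁ x))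
    (hT₁ : ∀ y, adjMap R₁ (T₁ y) = B₁ y)
    (hT₁ran : ∀ y, T₁ y ∈ closure (Set.range R₁)) :
    -- (i) 𝒮(𝐀) ≤ 𝐀
    (∀ (x : X) (y : Y),
        (D y - adjMap T (T y)) y ≤ (A x + B y) x + ((Btilde B) x + D y) y) ∧
      -- (i) ker 𝐀 ⊆ ker 𝒮(𝐀)
      (∀ (x : X) (y : Y), A x + B y = 0 → Btilde B x + D y = 0 →
        D y - adjMap T (T y) = 0) ∧
      -- (ii) 𝐀 ≤ 𝐀₁ → 𝒮(𝐀) ≤ 𝒮(𝐀₁)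
      ((∀ (x : X) (y : Y),
          (A x + B y) x + ((Btilde B) x + D y) y ≤
            (A₁ x + B₁ y) x + ((Btilde B₁) x + D₁ y) y) →
        ∀ y : Y, (D y - adjMap T (T y)) y ≤ (D₁ y - adjMap T₁ (T₁ y)) y) ∧
      -- (iii) 𝐀 ≥ 0 → 𝒮(𝐀) ≥ 0
      ((∀ (x : X) (y : Y), 0 ≤ (A x + B y) x + ((Btilde B) x + D y) y) →
        ∀ y : Y, 0 ≤ (D y - adjMap T (T y)) y) :=
  schur_stmt10_general A B D A₁ B₁ D₁ R T R₁ T₁ hR hT hTran hR₁ hT₁ hT₁ran
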